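/- Let (s⁺, p⁺, y⁺, t⁺, U⁺) be a feasible point of problem (P_R2) that attains its optimal value. Define p′ := e^{−y⁺} and s′ := s⁺ + diag(α)^{-1}·B·(p⁺ − p′). Then (s′, p′) is feasible for problem (P), i.e., s′ ≥ 0, p′ ≥ 0 and g(s′, p′) = 0, and f(s⁺, p⁺) ≤ f* ≤ f(s′, p′). -/

import Mathlib

noncomputable section

open Matrix

/-- Irreducibility of a nonnegative matrix. -/
def MatIrred {N : ℕ} (B : Matrix (Fin N) (Fin N) ℝ) : Prop :=
  ∀ i j, ∃ k : ℕ, 1 ≤ k ∧ 0 < (B ^ k) i j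

/-- The map `g(s,p)` with `g_i(s,p) = (1 - p_i)(λ_i + (Bp)_i) - (α_i s_i + δ_i) p_i`. -/
def gfun {N : ℕ} (B : Matrix (Fin N) (Fin N) ℝ) (lam δ α s p : Fin N → ℝ) : Fin N → ℝ :=
  fun i => (1 - p i) * (lam i + B.mulVec p i) - (α i * s i + δ i) * p i

/-- The objective `f(s,p) = w(s) + cᵀp`. -/
def fobj {N : ℕ} (w : (Fin N → ℝ) → ℝ) (c : Fin N → ℝ) (s p : Fin N → ℝ) : ℝ :=
  w s + ∑ i, c i * p i

/-- Feasibility for the original problem (P). -/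
def FeasP {N : ℕ} (B : Matrix (Fin N) (Fin N) ℝ) (lam δ α : Fin N → ℝ)
    (s p : Fin N → ℝ) : Prop :=
  (∀ i, 0 ≤ s i) ∧ (∀ i, 0 ≤ p i) ∧ gfun B lam δ α s p = 0

/-- Feasibility for the convex relaxation (P_R2) based on exponential cones. -/
def FeasPR2 {N : ℕ} (B : Matrix (Fin N) (Fin N) ℝ) (lam δ α : Fin N → ℝ)
    (s p y t : Fin N → ℝ) (U : Matrix (Fin N) (Fin N) ℝ) : Prop :=
  (∀ i, 0 ≤ s i) ∧ (∀ i, 0 ≤ y i) ∧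
  (∀ i, t i + ∑ j, U i j = lam i + B.mulVec p i + α i * s i + δ i) ∧
  (∀ i, Real.exp (-(y i)) ≤ p i) ∧ (∀ i, p i ≤ 1) ∧
  (∀ i, lam i * Real.exp (y i) ≤ t i) ∧
  (∀ i j, Real.exp (y i) * B i j * Real.exp (-(y j)) ≤ U i j)

/-!
Every feasible point `(s, p)` of (P) has `0 < p ≤ 1` (a zero of `p` would propagate along the
edges of the irreducible `B` to all of `p`, forcing `λ = 0`), so it lifts to (P_R2) with
`y = -log p`, `U_ij = B_ij p_j / p_i`, `t_i = λ_i / p_i` and the same objective; hence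
`f(s⁺, p⁺) ≤ f*`.

Conversely, at an optimum of (P_R2) every row
`e^{y_i}(λ_i + (B e^{-y})_i) ≤ (λ + Bp + α∘s + δ)_i` of its projection to `(s, p, y)` is tight:
if row `i` had slack, raising `y_i` by a small `d` and lowering `p_i` by `e^{-y_i} - e^{-y_i-d}`
would stay feasible (as `y ≥ 0`, the left side of every other row drops at least as much as its
right side) while decreasing `cᵀp`. Tightness at `p' = e^{-y⁺}` is `g(s', p') = 0`, since the
shift from `s⁺` to `s'` absorbs `B(p⁺ - p')` and leaves `λ + Bp + α∘s + δ` unchanged.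
-/

open Real Filter Topology

theorem Matrix.of_pow_apply_ne_zero {n R : Type*} [Fintype n] [DecidableEq n] [Semiring R]
    {B : Matrix n n R} {P : n → Prop} (hP : ∀ i j, P i → B i j ≠ 0 → P j) {i : n}
    (hi : P i) (k : ℕ) {j : n} (hij : (B ^ k) i j ≠ 0) : P j := by
  induction k generalizing j with
  | zero =>
    obtain rfl : i = j := by by_contra h; exact hij (Matrix.one_apply_ne h)
    exact hi
  | succ k ih =>
    rw [pow_succ, Matrix.mul_apply] at hij
    obtain ⟨m, -, hm⟩ := Finset.exists_ne_zero_of_sum_ne_zero hij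
    exact hP m j (ih (left_ne_zero_of_mul hm)) (right_ne_zero_of_mul hm)

lemma Matrix.mulVec_apply_nonneg {m n : Type*} [Fintype n] {B : Matrix m n ℝ}
    (hB : ∀ i j, 0 ≤ B i j) {v : n → ℝ} (hv : 0 ≤ v) (i : m) : 0 ≤ (B *ᵥ v) i :=
  Finset.sum_nonneg fun j _ => mul_nonneg (hB i j) (hv j)

section
variable {N : ℕ} (B : Matrix (Fin N) (Fin N) ℝ) (lam δ α : Fin N → ℝ)

def rowTotal (s p : Fin N → ℝ) : Fin N → ℝ := lam + B *ᵥ p + α * s + δ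

-- the least value of `t_i + ∑ j, U_ij` that the cone constraints of (P_R2) allow at `y`
def coneBound (y : Fin N → ℝ) : Fin N → ℝ :=
  fun i => exp (y i) * (lam i + (B *ᵥ fun j => exp (-y j)) i)

def ReducedFeasPR2 (s p y : Fin N → ℝ) : Prop :=
  0 ≤ s ∧ 0 ≤ y ∧ (fun j => exp (-y j)) ≤ p ∧ p ≤ 1 ∧
    coneBound B lam y ≤ rowTotal B lam δ α s p

variable {B lam δ α}

lemma gfun_eq (s p : Fin N → ℝ) :
    gfun B lam δ α s p = lam + B *ᵥ p - p * rowTotal B lam δ α s p := by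
  ext i
  simp only [gfun, rowTotal, Pi.add_apply, Pi.sub_apply, Pi.mul_apply]
  ring

lemma coneBound_apply (y : Fin N → ℝ) (i : Fin N) :
    coneBound B lam y i = lam i * exp (y i) + ∑ j, exp (y i) * B i j * exp (-y j) := by
  simp only [coneBound, mulVec, dotProduct, mul_add, Finset.mul_sum, mul_assoc]
  ring

lemma exists_feasPR2_iff (s p y : Fin N → ℝ) :
    (∃ t U, FeasPR2 B lam δ α s p y t U) ↔ ReducedFeasPR2 B lam δ α s p y := by
  constructor
  · rintro ⟨t, U, hs, hy, hrow, hpl, hpu, ht, hU⟩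
    refine ⟨hs, hy, hpl, hpu, fun i => ?_⟩
    calc coneBound B lam y i
        = lam i * exp (y i) + ∑ j, exp (y i) * B i j * exp (-y j) := coneBound_apply y i
      _ ≤ t i + ∑ j, U i j := add_le_add (ht i) (Finset.sum_le_sum fun j _ => hU i j)
      _ = rowTotal B lam δ α s p i := hrow i
  · rintro ⟨hs, hy, hpl, hpu, hrow⟩
    refine ⟨fun i => rowTotal B lam δ α s p i - ∑ j, exp (y i) * B i j * exp (-y j),
      fun i j => exp (y i) * B i j * exp (-y j), hs, hy, fun i => sub_add_cancel _ _, hpl, hpu,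
      fun i => ?_, fun i j => le_rfl⟩
    have := hrow i
    rw [coneBound_apply] at this
    linarith

lemma exp_mul_le_rowTotal_sub (hB : ∀ i j, 0 ≤ B i j) {s p q v : Fin N → ℝ} (hv : 0 ≤ v)
    {k : Fin N} {x : ℝ} (hx : 0 ≤ x)
    (h : exp x * (lam k + (B *ᵥ q) k) ≤ rowTotal B lam δ α s p k) :
    exp x * (lam k + (B *ᵥ (q - v)) k) ≤ rowTotal B lam δ α s (p - v) k := by
  have hBv : 0 ≤ (B *ᵥ v) k := mulVec_apply_nonneg hB hv k
  have hexp : 1 * (B *ᵥ v) k ≤ exp x * (B *ᵥ v) k :=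
    mul_le_mul_of_nonneg_right (one_le_exp hx) hBv
  simp only [rowTotal, mulVec_sub, Pi.add_apply, Pi.sub_apply, Pi.mul_apply] at h ⊢
  linarith

lemma ReducedFeasPR2.perturb (hB : ∀ i j, 0 ≤ B i j) {s p y : Fin N → ℝ}
    (h : ReducedFeasPR2 B lam δ α s p y) (i : Fin N) {d : ℝ} (hd : 0 ≤ d)
    (hdi : exp d * coneBound B lam y i ≤ rowTotal B lam δ α s p i) :
    ReducedFeasPR2 B lam δ α s (p - Pi.single i (exp (-y i) - exp (-(y i + d))))
      (Function.update y i (y i + d)) := by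
  obtain ⟨hs, hy, hpl, hpu, hrow⟩ := h
  set y' := Function.update y i (y i + d)
  set θ := exp (-y i) - exp (-(y i + d))
  have hθ : 0 ≤ θ := sub_nonneg.2 (exp_le_exp.2 (by linarith))
  have hv : 0 ≤ (Pi.single i θ : Fin N → ℝ) := Pi.single_nonneg.2 hθ
  have hq : (fun j => exp (-y' j)) = (fun j => exp (-y j)) - Pi.single i θ := by
    funext j
    rcases eq_or_ne j i with rfl | hj
    · simp [y', θ]
    · simp [y', hj]
  have hy' : 0 ≤ y' := fun j => by
    rcases eq_or_ne j i with rfl | hj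
    · simpa [y'] using add_nonneg (hy j) hd
    · simpa [y', hj] using hy j
  refine ⟨hs, hy', ?_, (sub_le_self _ hv).trans hpu, fun k => ?_⟩
  · rw [hq]
    exact sub_le_sub_right hpl _
  · rw [coneBound, hq]
    refine exp_mul_le_rowTotal_sub hB hv (hy' k) ?_
    rcases eq_or_ne k i with rfl | hk
    · rw [show y' k = d + y k by simp [y', add_comm], exp_add, mul_assoc]
      exact hdi
    · rw [show y' k = y k from Function.update_of_ne hk _ _]
      exact hrow k

lemma fobj_sub_single (w : (Fin N → ℝ) → ℝ) (c s p : Fin N → ℝ) (i : Fin N) (θ : ℝ) :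
    fobj w c s (p - Pi.single i θ) = fobj w c s p - c i * θ := by
  simp [fobj, mul_sub, Finset.sum_sub_distrib, Pi.single_apply]
  ring

lemma ReducedFeasPR2.coneBound_eq_of_forall_le (hB : ∀ i j, 0 ≤ B i j)
    {w : (Fin N → ℝ) → ℝ} {c : Fin N → ℝ} (hc : ∀ i, 0 < c i) {s p y : Fin N → ℝ}
    (h : ReducedFeasPR2 B lam δ α s p y)
    (hmin : ∀ p' y', ReducedFeasPR2 B lam δ α s p' y' → fobj w c s p ≤ fobj w c s p') :
    coneBound B lam y = rowTotal B lam δ α s p := by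
  funext i
  refine le_antisymm (h.2.2.2.2 i) (not_lt.1 fun hlt => ?_)
  have hcont : Tendsto (fun d => exp d * coneBound B lam y i) (𝓝[>] 0)
      (𝓝 (coneBound B lam y i)) := by
    refine Tendsto.mono_left ?_ nhdsWithin_le_nhds
    exact (continuous_exp.mul continuous_const).tendsto' 0 _ (by simp)
  obtain ⟨d, hdi, hd⟩ := ((hcont.eventually (gt_mem_nhds hlt)).and self_mem_nhdsWithin).exists
  have hθ : 0 < exp (-y i) - exp (-(y i + d)) := sub_pos.2 (exp_lt_exp.2 (by linarith [hd]))
  have hle := hmin _ _ (h.perturb hB i hd.le hdi.le)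
  rw [fobj_sub_single] at hle
  linarith [mul_pos (hc i) hθ]

lemma FeasP.row_eq {s p : Fin N → ℝ} (h : FeasP B lam δ α s p) (i : Fin N) :
    lam i + (B *ᵥ p) i = p i * rowTotal B lam δ α s p i := by
  have := congrFun (gfun_eq s p ▸ h.2.2) i
  simp only [Pi.sub_apply, Pi.add_apply, Pi.mul_apply, Pi.zero_apply] at this
  linarith

lemma FeasP.pos (hB : ∀ i j, 0 ≤ B i j) (hirr : MatIrred B) (hlam : ∀ i, 0 ≤ lam i)
    (hlam0 : lam ≠ 0) {s p : Fin N → ℝ} (h : FeasP B lam δ α s p) (i : Fin N) :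
    0 < p i := by
  have hp := h.2.1
  have hzero : ∀ i, p i = 0 → lam i = 0 ∧ (B *ᵥ p) i = 0 := fun i hi => by
    have := h.row_eq i
    rw [hi, zero_mul] at this
    have := mulVec_apply_nonneg hB hp i
    constructor <;> linarith [hlam i]
  have hclosed : ∀ i j, p i = 0 → B i j ≠ 0 → p j = 0 := fun i j hi hij =>
    have hsum : ∑ j, B i j * p j = 0 := (hzero i hi).2
    have := (Finset.sum_eq_zero_iff_of_nonneg fun j _ => mul_nonneg (hB i j) (hp j)).1 hsum j
      (Finset.mem_univ j)
    (mul_eq_zero.1 this).resolve_left hij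
  refine (hp i).lt_of_ne' fun hi => hlam0 (funext fun j => (hzero j ?_).1)
  obtain ⟨k, -, hk⟩ := hirr i j
  exact Matrix.of_pow_apply_ne_zero hclosed hi k hk.ne'

lemma FeasP.le_one (hB : ∀ i j, 0 ≤ B i j) (hlam : ∀ i, 0 ≤ lam i) (hδ : ∀ i, 0 < δ i)
    (hα : ∀ i, 0 ≤ α i) {s p : Fin N → ℝ} (h : FeasP B lam δ α s p) : p ≤ 1 := by
  intro i
  rw [Pi.one_apply]
  by_contra! hgt
  have hrow := h.row_eq i
  have ha : 0 ≤ lam i + (B *ᵥ p) i := add_nonneg (hlam i) (mulVec_apply_nonneg hB h.2.1 i)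
  have he : 0 < α i * s i + δ i := add_pos_of_nonneg_of_pos (mul_nonneg (hα i) (h.1 i)) (hδ i)
  simp only [rowTotal, Pi.add_apply, Pi.mul_apply] at hrow
  nlinarith

lemma FeasP.reducedFeasPR2_neg_log {s p : Fin N → ℝ} (h : FeasP B lam δ α s p)
    (hpos : ∀ i, 0 < p i) (hle : p ≤ 1) :
    ReducedFeasPR2 B lam δ α s p fun i => -log (p i) := by
  have hq : (fun j => exp (-(-log (p j)))) = p := funext fun j => by rw [neg_neg, exp_log (hpos j)]
  refine ⟨h.1, fun i => neg_nonneg.2 (log_nonpos (hpos i).le (hle i)), hq.le, hle, fun i => ?_⟩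
  rw [coneBound, hq, exp_neg, exp_log (hpos i), h.row_eq i, inv_mul_cancel_left₀ (hpos i).ne']

lemma ReducedFeasPR2.feasP_of_coneBound_eq (hB : ∀ i j, 0 ≤ B i j) (hα : ∀ i, 0 < α i)
    {s p y : Fin N → ℝ} (h : ReducedFeasPR2 B lam δ α s p y)
    (htight : coneBound B lam y = rowTotal B lam δ α s p) :
    FeasP B lam δ α (fun i => s i + (α i)⁻¹ * (B *ᵥ fun j => p j - exp (-y j)) i)
      fun i => exp (-y i) := by
  set q := fun j => exp (-y j)
  refine ⟨fun i => add_nonneg (h.1 i) (mul_nonneg (inv_nonneg.2 (hα i).le)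
    (mulVec_apply_nonneg hB (sub_nonneg.2 h.2.2.1) i)), fun i => (exp_pos _).le, ?_⟩
  have hR : rowTotal B lam δ α (fun i => s i + (α i)⁻¹ * (B *ᵥ fun j => p j - q j) i) q =
      rowTotal B lam δ α s p := by
    ext i
    simp only [rowTotal, show (fun j => p j - q j) = p - q from rfl, mulVec_sub, Pi.add_apply,
      Pi.sub_apply, Pi.mul_apply]
    field_simp [(hα i).ne']
    ring
  have hqy : ∀ i, q i * exp (y i) = 1 := fun i => by rw [← exp_add, neg_add_cancel, exp_zero]
  rw [gfun_eq, hR, ← htight]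
  ext i
  simp only [coneBound, Pi.sub_apply, Pi.add_apply, Pi.mul_apply, Pi.zero_apply]
  linear_combination -(lam i + (B *ᵥ q) i) * hqy i

end

theorem statement10_general {N : ℕ}
    (B : Matrix (Fin N) (Fin N) ℝ) (hBnn : ∀ i j, 0 ≤ B i j) (hBirr : MatIrred B)
    (lam δ α : Fin N → ℝ)
    (hlam : ∀ i, 0 ≤ lam i) (hlam0 : lam ≠ 0)
    (hδ : ∀ i, 0 < δ i) (hα : ∀ i, 0 < α i)
    (w : (Fin N → ℝ) → ℝ)
    (c : Fin N → ℝ) (hc : ∀ i, 0 < c i)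
    (sP pP yP tP : Fin N → ℝ) (UP : Matrix (Fin N) (Fin N) ℝ)
    (hfeas : FeasPR2 B lam δ α sP pP yP tP UP)
    (hopt : ∀ (s p y t : Fin N → ℝ) (U : Matrix (Fin N) (Fin N) ℝ),
      FeasPR2 B lam δ α s p y t U → fobj w c sP pP ≤ fobj w c s p)
    (p' s' : Fin N → ℝ)
    (hp' : p' = fun i => Real.exp (-(yP i)))
    (hs' : s' = fun i => sP i + (α i)⁻¹ * B.mulVec (fun j => pP j - p' j) i) :
    FeasP B lam δ α s' p' ∧
    fobj w c sP pP ≤ sInf {v | ∃ s p, FeasP B lam δ α s p ∧ v = fobj w c s p} ∧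
    sInf {v | ∃ s p, FeasP B lam δ α s p ∧ v = fobj w c s p} ≤ fobj w c s' p' := by
  subst hp' hs'
  set F := {v | ∃ s p, FeasP B lam δ α s p ∧ v = fobj w c s p}
  have hrelax := (exists_feasPR2_iff sP pP yP).1 ⟨tP, UP, hfeas⟩
  have hmin : ∀ s p y, ReducedFeasPR2 B lam δ α s p y → fobj w c sP pP ≤ fobj w c s p :=
    fun s p y h => by
      obtain ⟨t, U, h⟩ := (exists_feasPR2_iff s p y).2 h
      exact hopt s p y t U h
  have hP := hrelax.feasP_of_coneBound_eq hBnn hα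
    (hrelax.coneBound_eq_of_forall_le hBnn hc fun p y => hmin sP p y)
  have hlower : fobj w c sP pP ∈ lowerBounds F := by
    rintro _ ⟨s, p, h, rfl⟩
    exact hmin s p _ (h.reducedFeasPR2_neg_log (h.pos hBnn hBirr hlam hlam0)
      (h.le_one hBnn hlam hδ fun i => (hα i).le))
  have hmem : fobj w c _ _ ∈ F := ⟨_, _, hP, rfl⟩
  exact ⟨hP, le_csInf ⟨_, hmem⟩ hlower, csInf_le ⟨_, hlower⟩ hmem⟩

theorem statement10 {N : ℕ} (hN : 2 ≤ N)
    (B : Matrix (Fin N) (Fin N) ℝ) (hBnn : ∀ i j, 0 ≤ B i j) (hBirr : MatIrred B)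
    (lam δ α : Fin N → ℝ)
    (hlam : ∀ i, 0 ≤ lam i) (hlam0 : lam ≠ 0)
    (hδ : ∀ i, 0 < δ i) (hα : ∀ i, 0 < α i)
    (w : (Fin N → ℝ) → ℝ) (hwcont : Continuous w)
    (hwconv : ConvexOn ℝ Set.univ w)
    (hwmono : ∀ s s' : Fin N → ℝ, s ≤ s' → s ≠ s' → w s < w s')
    (c : Fin N → ℝ) (hc : ∀ i, 0 < c i)
    (sP pP yP tP : Fin N → ℝ) (UP : Matrix (Fin N) (Fin N) ℝ)
    (hfeas : FeasPR2 B lam δ α sP pP yP tP UP)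
    (hopt : ∀ (s p y t : Fin N → ℝ) (U : Matrix (Fin N) (Fin N) ℝ),
      FeasPR2 B lam δ α s p y t U → fobj w c sP pP ≤ fobj w c s p)
    (p' s' : Fin N → ℝ)
    (hp' : p' = fun i => Real.exp (-(yP i)))
    (hs' : s' = fun i => sP i + (α i)⁻¹ * B.mulVec (fun j => pP j - p' j) i) :
    FeasP B lam δ α s' p' ∧
    fobj w c sP pP ≤ sInf {v | ∃ s p, FeasP B lam δ α s p ∧ v = fobj w c s p} ∧
    sInf {v | ∃ s p, FeasP B lam δ α s p ∧ v = fobj w c s p} ≤ fobj w c s' p' :=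
  statement10_general B hBnn hBirr lam δ α hlam hlam0 hδ hα w c hc sP pP yP tP UP hfeas hopt p' s'
    hp' hs'
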